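/- arXiv:1007.1756 — 6 statements merged into one kernel-verified Lean document; each statement's English description precedes it below -/
import Mathlib

section
/- The rate pair (L1, L2) obtained when each user fully uses its interference-free levels belongs to C ∩ B; in particular L1 ≤ U1, L2 ≤ U2, so the box B is nonempty, and the Nash equilibrium region C ∩ B of the two-user linear deterministic interference channel is nonempty. -/
/-- Positive part of an integer: `x⁺ = max(x,0)`. -/
def ipos (x : ℤ) : ℤ := max x 0

/-- Capacity region `C` of the two-user linear deterministic interference channel
with gains `n11 n12 n21 n22`, as a predicate on rate pairs `(R1, R2)`. -/
def detC (n11 n12 n21 n22 : ℤ) (R1 R2 : ℝ) : Prop :=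
  0 ≤ R1 ∧ 0 ≤ R2 ∧
  R1 ≤ (n11 : ℝ) ∧ R2 ≤ (n22 : ℝ) ∧
  R1 + R2 ≤ ((ipos (n11 - n12) + max n22 n12 : ℤ) : ℝ) ∧
  R1 + R2 ≤ ((ipos (n22 - n21) + max n11 n21 : ℤ) : ℝ) ∧
  R1 + R2 ≤ ((max n21 (ipos (n11 - n12)) + max n12 (ipos (n22 - n21)) : ℤ) : ℝ) ∧
  2 * R1 + R2 ≤ ((max n11 n21 + ipos (n11 - n12) + max n12 (ipos (n22 - n21)) : ℤ) : ℝ) ∧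
  R1 + 2 * R2 ≤ ((max n22 n12 + ipos (n22 - n21) + max n21 (ipos (n11 - n12)) : ℤ) : ℝ)

/-- `Lᵢ = (nᵢᵢ − nᵢⱼ)⁺`. -/
def detL (nii nij : ℤ) : ℤ := ipos (nii - nij)

/-- `Uᵢ`: `nᵢᵢ − min(Lⱼ, nᵢⱼ)` if `nᵢⱼ ≤ nᵢᵢ`, else `min((nᵢⱼ − Lⱼ)⁺, nᵢᵢ)`,
where `Lⱼ = (nⱼⱼ − nⱼᵢ)⁺`. -/
def detU (nii nij nji njj : ℤ) : ℤ :=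
  if nij ≤ nii then nii - min (detL njj nji) nij
  else min (ipos (nij - detL njj nji)) nii

/-- The box `B = {(R1,R2) : Lᵢ ≤ Rᵢ ≤ Uᵢ, i = 1,2}`. -/
def detB (n11 n12 n21 n22 : ℤ) (R1 R2 : ℝ) : Prop :=
  ((detL n11 n12 : ℤ) : ℝ) ≤ R1 ∧ R1 ≤ ((detU n11 n12 n21 n22 : ℤ) : ℝ) ∧
  ((detL n22 n21 : ℤ) : ℝ) ≤ R2 ∧ R2 ≤ ((detU n22 n21 n12 n11 : ℤ) : ℝ)

theorem detL_nonneg (nii nij : ℤ) : 0 ≤ detL nii nij := le_max_right _ _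

theorem detL_le_self {nii nij : ℤ} (hii : 0 ≤ nii) (hij : 0 ≤ nij) : detL nii nij ≤ nii :=
  max_le (by omega) hii

/-- When `nᵢⱼ ≤ nᵢᵢ` the lower end is `nᵢᵢ − nᵢⱼ ≤ nᵢᵢ − min(Lⱼ, nᵢⱼ)`; otherwise it is `0`. -/
theorem detL_le_detU {nii : ℤ} (nij nji njj : ℤ) (hii : 0 ≤ nii) :
    detL nii nij ≤ detU nii nij nji njj := by
  unfold detU
  split_ifs with hle
  · have hL : detL nii nij = nii - nij := max_eq_left (by omega)
    rw [hL]
    linarith [min_le_right (detL njj nji) nij]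
  · have hL : detL nii nij = 0 := max_eq_right (by omega)
    rw [hL]
    exact le_min (le_max_right _ _) hii

/-- Each bound of `C` dominates the same combination of `L₁, L₂`, so the whole rectangle
`[0, L₁] × [0, L₂]` lies in `C`. -/
theorem detC_of_le_detL {n11 n12 n21 n22 : ℤ}
    (h11 : 0 ≤ n11) (h12 : 0 ≤ n12) (h21 : 0 ≤ n21) (h22 : 0 ≤ n22) {R1 R2 : ℝ}
    (hR1 : 0 ≤ R1) (hR1L : R1 ≤ detL n11 n12) (hR2 : 0 ≤ R2) (hR2L : R2 ≤ detL n22 n21) :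
    detC n11 n12 n21 n22 R1 R2 := by
  have hL1 : (detL n11 n12 : ℝ) ≤ n11 := by exact_mod_cast detL_le_self h11 h12
  have hL2 : (detL n22 n21 : ℝ) ≤ n22 := by exact_mod_cast detL_le_self h22 h21
  simp only [detC, ← detL.eq_1]
  push_cast
  refine ⟨hR1, hR2, by linarith, by linarith, ?_, ?_, ?_, ?_, ?_⟩
  · linarith [le_max_left (n22 : ℝ) n12]
  · linarith [le_max_left (n11 : ℝ) n21]
  · linarith [le_max_right (n21 : ℝ) (detL n11 n12), le_max_right (n12 : ℝ) (detL n22 n21)]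
  · linarith [le_max_left (n11 : ℝ) n21, le_max_right (n12 : ℝ) (detL n22 n21)]
  · linarith [le_max_left (n22 : ℝ) n12, le_max_right (n21 : ℝ) (detL n11 n12)]

/-- The rate pair `(L1, L2)` lies in `C ∩ B`; in particular `L1 ≤ U1` and `L2 ≤ U2`, so the
Nash equilibrium region `C ∩ B` of the two-user linear deterministic IC is nonempty. -/
theorem stmt4 (n11 n12 n21 n22 : ℤ)
    (h11 : 0 ≤ n11) (h12 : 0 ≤ n12) (h21 : 0 ≤ n21) (h22 : 0 ≤ n22) :
    detC n11 n12 n21 n22 ((detL n11 n12 : ℤ) : ℝ) ((detL n22 n21 : ℤ) : ℝ) ∧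
    detB n11 n12 n21 n22 ((detL n11 n12 : ℤ) : ℝ) ((detL n22 n21 : ℤ) : ℝ) ∧
    detL n11 n12 ≤ detU n11 n12 n21 n22 ∧
    detL n22 n21 ≤ detU n22 n21 n12 n11 := by
  have hU1 := detL_le_detU n12 n21 n22 h11
  have hU2 := detL_le_detU n21 n12 n11 h22
  refine ⟨detC_of_le_detL h11 h12 h21 h22 (by exact_mod_cast detL_nonneg n11 n12) le_rfl
      (by exact_mod_cast detL_nonneg n22 n21) le_rfl,
    ⟨le_rfl, by exact_mod_cast hU1, le_rfl, by exact_mod_cast hU2⟩, hU1, hU2⟩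
end

section
/- The Nash equilibrium region C ∩ B of the two-user linear deterministic interference channel always contains an efficient point: there exists (R1,R2) ∈ C ∩ B such that R1'+R2' ≤ R1+R2 for every (R1',R2') ∈ C. -/
open scoped Pointwise in
theorem Set.mem_Icc_add_Icc {α : Type*} [AddCommGroup α] [LinearOrder α] [IsOrderedAddMonoid α]
    {a b c d s : α} (hab : a ≤ b) (hcd : c ≤ d) (hs : s ∈ Set.Icc (a + c) (b + d)) :
    s ∈ Set.Icc a b + Set.Icc c d := by
  refine Set.mem_add.2 ⟨max a (s - d), ⟨le_max_left _ _, max_le hab ?_⟩,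
    s - max a (s - d), ⟨?_, ?_⟩, add_sub_cancel _ _⟩
  · exact sub_le_iff_le_add.2 hs.2
  · exact le_sub_comm.1 (max_le (le_sub_iff_add_le.2 hs.1) (sub_le_sub_left hcd s))
  · exact sub_le_comm.1 (le_max_right _ _)

section
variable (n11 n12 n21 n22 : ℤ)

def detSumCap : ℤ :=
  min (n11 + n22) (min (ipos (n11 - n12) + max n22 n12)
    (min (ipos (n22 - n21) + max n11 n21)
      (max n21 (ipos (n11 - n12)) + max n12 (ipos (n22 - n21)))))

/-- The right-hand side of the bound on `2 * R1 + R2` in `detC`; the bound on `R1 + 2 * R2` is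
`detWeightCap n22 n21 n12 n11`. -/
def detWeightCap : ℤ := max n11 n21 + ipos (n11 - n12) + max n12 (ipos (n22 - n21))

/-- On the line `R1 + R2 = detSumCap`, the constraints `R1 ≤ n11`, `2 * R1 + R2 ≤ detWeightCap`
and `R1 ≤ detU` of `C` and `B` all become upper bounds on `R1`; this is the tightest of them. -/
def detRateCap : ℤ :=
  min n11 (min (detWeightCap n11 n12 n21 n22 - detSumCap n11 n12 n21 n22) (detU n11 n12 n21 n22))

theorem detSumCap_le :
    detSumCap n11 n12 n21 n22 ≤ n11 + n22 ∧
      detSumCap n11 n12 n21 n22 ≤ ipos (n11 - n12) + max n22 n12 ∧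
      detSumCap n11 n12 n21 n22 ≤ ipos (n22 - n21) + max n11 n21 ∧
      detSumCap n11 n12 n21 n22 ≤ max n21 (ipos (n11 - n12)) + max n12 (ipos (n22 - n21)) := by
  simp only [detSumCap, min_le_iff, le_refl, true_or, or_true, and_self]

theorem detSumCap_swap : detSumCap n22 n21 n12 n11 = detSumCap n11 n12 n21 n22 := by
  simp only [detSumCap]
  omega

theorem detL_le_detRateCap (h11 : 0 ≤ n11) (h12 : 0 ≤ n12) :
    detL n11 n12 ≤ detRateCap n11 n12 n21 n22 := by
  have hU : detL n11 n12 ≤ detU n11 n12 n21 n22 := by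
    simp only [detU, detL, ipos]
    split_ifs <;> omega
  simp only [detRateCap, detWeightCap, detSumCap, detL, ipos] at hU ⊢
  omega

theorem detL_add_detL_le_detSumCap (h11 : 0 ≤ n11) (h12 : 0 ≤ n12) (h21 : 0 ≤ n21)
    (h22 : 0 ≤ n22) : detL n11 n12 + detL n22 n21 ≤ detSumCap n11 n12 n21 n22 := by
  simp only [detSumCap, detL, ipos]
  omega

theorem two_mul_detSumCap_le_add_detWeightCap :
    2 * detSumCap n11 n12 n21 n22 ≤ n11 + detWeightCap n22 n21 n12 n11 := by
  simp only [detSumCap, detWeightCap, ipos]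
  omega

/- `detWeightCap n11 n12 n21 n22 + detWeightCap n22 n21 n12 n11` is the sum of the three
sum-rate bounds of `C`. -/
theorem three_mul_detSumCap_le_detWeightCap_add_detWeightCap :
    3 * detSumCap n11 n12 n21 n22 ≤
      detWeightCap n11 n12 n21 n22 + detWeightCap n22 n21 n12 n11 := by
  obtain ⟨-, h1, h2, h3⟩ := detSumCap_le n11 n12 n21 n22
  simp only [detWeightCap]
  linarith

theorem detSumCap_le_add_detU (h12 : 0 ≤ n12) :
    detSumCap n11 n12 n21 n22 ≤ n11 + detU n22 n21 n12 n11 := by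
  simp only [detSumCap, detU, detL, ipos]
  split_ifs <;> omega

theorem two_mul_detSumCap_le_detWeightCap_add_detU :
    2 * detSumCap n11 n12 n21 n22 ≤ detWeightCap n11 n12 n21 n22 + detU n22 n21 n12 n11 := by
  simp only [detSumCap, detWeightCap, detU, detL, ipos]
  split_ifs <;> omega

theorem detSumCap_le_detU_add_detU :
    detSumCap n11 n12 n21 n22 ≤ detU n11 n12 n21 n22 + detU n22 n21 n12 n11 := by
  simp only [detSumCap, detU, detL, ipos]
  split_ifs <;> omega

theorem detSumCap_le_detRateCap_add_detRateCap (h12 : 0 ≤ n12) (h21 : 0 ≤ n21) :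
    detSumCap n11 n12 n21 n22 ≤ detRateCap n11 n12 n21 n22 + detRateCap n22 n21 n12 n11 := by
  have := detSumCap_le n11 n12 n21 n22
  have := two_mul_detSumCap_le_add_detWeightCap n11 n12 n21 n22
  have := detSumCap_le_add_detU n11 n12 n21 n22 h12
  have := three_mul_detSumCap_le_detWeightCap_add_detWeightCap n11 n12 n21 n22
  have := two_mul_detSumCap_le_detWeightCap_add_detU n11 n12 n21 n22
  have := detSumCap_le_detU_add_detU n11 n12 n21 n22
  have := two_mul_detSumCap_le_add_detWeightCap n22 n21 n12 n11
  have := detSumCap_le_add_detU n22 n21 n12 n11 h21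
  have := two_mul_detSumCap_le_detWeightCap_add_detU n22 n21 n12 n11
  simp only [detRateCap, detSumCap_swap] at *
  omega

variable {n11 n12 n21 n22}

theorem detC_of_mem_Icc {R1 R2 : ℤ}
    (h1 : R1 ∈ Set.Icc (detL n11 n12) (detRateCap n11 n12 n21 n22))
    (h2 : R2 ∈ Set.Icc (detL n22 n21) (detRateCap n22 n21 n12 n11))
    (hsum : R1 + R2 = detSumCap n11 n12 n21 n22) : detC n11 n12 n21 n22 R1 R2 := by
  obtain ⟨hL1, hR1⟩ := h1
  obtain ⟨hL2, hR2⟩ := h2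
  simp only [detRateCap, detWeightCap, detSumCap_swap, le_min_iff] at hR1 hR2
  have hS := detSumCap_le n11 n12 n21 n22
  have hL1_nonneg : 0 ≤ detL n11 n12 := le_max_right _ _
  have hL2_nonneg : 0 ≤ detL n22 n21 := le_max_right _ _
  simp only [detC]
  norm_cast
  refine ⟨?_, ?_, ?_, ?_, ?_, ?_, ?_, ?_, ?_⟩ <;> linarith

theorem detB_of_mem_Icc {R1 R2 : ℤ}
    (h1 : R1 ∈ Set.Icc (detL n11 n12) (detRateCap n11 n12 n21 n22))
    (h2 : R2 ∈ Set.Icc (detL n22 n21) (detRateCap n22 n21 n12 n11)) :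
    detB n11 n12 n21 n22 R1 R2 := by
  simp only [Set.mem_Icc, detRateCap, le_min_iff] at h1 h2
  simp only [detB]
  norm_cast
  exact ⟨h1.1, h1.2.2.2, h2.1, h2.2.2.2⟩

theorem add_le_detSumCap_of_detC {R1 R2 : ℝ} (h : detC n11 n12 n21 n22 R1 R2) :
    R1 + R2 ≤ detSumCap n11 n12 n21 n22 := by
  obtain ⟨-, -, h1, h2, h3, h4, h5, -, -⟩ := h
  simp only [detSumCap, Int.cast_min]
  exact le_min (by push_cast; linarith) (le_min h3 (le_min h4 h5))

end

/-- The Nash equilibrium region `C ∩ B` of the two-user linear deterministic IC always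
contains an efficient (sum-rate optimal) point. -/
theorem stmt5 (n11 n12 n21 n22 : ℤ)
    (h11 : 0 ≤ n11) (h12 : 0 ≤ n12) (h21 : 0 ≤ n21) (h22 : 0 ≤ n22) :
    ∃ R1 R2 : ℝ, detC n11 n12 n21 n22 R1 R2 ∧ detB n11 n12 n21 n22 R1 R2 ∧
      ∀ R1' R2' : ℝ, detC n11 n12 n21 n22 R1' R2' → R1' + R2' ≤ R1 + R2 := by
  have hS : detSumCap n11 n12 n21 n22 ∈ Set.Icc (detL n11 n12 + detL n22 n21)
      (detRateCap n11 n12 n21 n22 + detRateCap n22 n21 n12 n11) :=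
    ⟨detL_add_detL_le_detSumCap n11 n12 n21 n22 h11 h12 h21 h22,
      detSumCap_le_detRateCap_add_detRateCap n11 n12 n21 n22 h12 h21⟩
  obtain ⟨R1, h1, R2, h2, hsum⟩ := Set.mem_Icc_add_Icc
    (detL_le_detRateCap n11 n12 n21 n22 h11 h12) (detL_le_detRateCap n22 n21 n12 n11 h22 h21) hS
  refine ⟨R1, R2, detC_of_mem_Icc h1 h2 hsum, detB_of_mem_Icc h1 h2, fun R1' R2' hC => ?_⟩
  calc R1' + R2' ≤ detSumCap n11 n12 n21 n22 := add_le_detSumCap_of_detC hC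
    _ = R1 + R2 := by exact_mod_cast hsum.symm
end

section
/- For the symmetric deterministic interference channel with n ≤ 2m and 3m ≤ 2n (normalized cross gain 1/2 ≤ α ≤ 2/3): B is the square [n−m, m] × [n−m, m] and B ⊆ C, so the Nash equilibrium region satisfies C ∩ B = B. -/
/-! For `m ≤ n ≤ 2m` one has `L = n - m` and `U = m`, so `B` is the square `[n - m, m]²`, and the
capacity region becomes an explicit polytope. Its binding constraints at the corner `(m, m)` are
`R1 + R2 ≤ 2n - m` and `2R1 + R2 ≤ 2n`, both of which amount to `3m ≤ 2n`. -/

section SymmetricChannel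

variable {n m : ℤ}

lemma ipos_of_nonneg {x : ℤ} (hx : 0 ≤ x) : ipos x = x := max_eq_left hx

lemma detL_of_le (h : m ≤ n) : detL n m = n - m :=
  ipos_of_nonneg (sub_nonneg.mpr h)

lemma detU_symm_of_le_of_le_two_mul (h : m ≤ n) (h' : n ≤ 2 * m) : detU n m m n = m := by
  rw [detU, if_pos h, detL_of_le h, min_eq_left (by omega)]
  ring

lemma detB_symm_iff (h : m ≤ n) (h' : n ≤ 2 * m) (R1 R2 : ℝ) :
    detB n m m n R1 R2 ↔
      (((n - m : ℤ) : ℝ) ≤ R1 ∧ R1 ≤ (m : ℝ) ∧ ((n - m : ℤ) : ℝ) ≤ R2 ∧ R2 ≤ (m : ℝ)) := by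
  rw [detB, detL_of_le h, detU_symm_of_le_of_le_two_mul h h']

lemma detC_symm_iff (h : m ≤ n) (h' : n ≤ 2 * m) (R1 R2 : ℝ) :
    detC n m m n R1 R2 ↔
      0 ≤ R1 ∧ 0 ≤ R2 ∧ R1 ≤ n ∧ R2 ≤ n ∧ R1 + R2 ≤ 2 * n - m ∧ R1 + R2 ≤ 2 * m ∧
        2 * R1 + R2 ≤ 2 * n ∧ R1 + 2 * R2 ≤ 2 * n := by
  have hL : ipos (n - m) = n - m := ipos_of_nonneg (sub_nonneg.mpr h)
  have hmax : max m (n - m) = m := max_eq_left (by omega)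
  simp only [detC, hL, hmax, max_eq_left h]
  push_cast
  constructor
  · rintro ⟨h0₁, h0₂, hR₁, hR₂, hs, -, hs', hw₁, hw₂⟩
    exact ⟨h0₁, h0₂, hR₁, hR₂, by linarith, by linarith, by linarith, by linarith⟩
  · rintro ⟨h0₁, h0₂, hR₁, hR₂, hs, hs', hw₁, hw₂⟩
    exact ⟨h0₁, h0₂, hR₁, hR₂, by linarith, by linarith, by linarith, by linarith, by linarith⟩

end SymmetricChannel

theorem stmt7_general (n m : ℤ) (h1 : n ≤ 2 * m) (h2 : 3 * m ≤ 2 * n) :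
    (∀ R1 R2 : ℝ, detB n m m n R1 R2 ↔
      (((n - m : ℤ) : ℝ) ≤ R1 ∧ R1 ≤ (m : ℝ) ∧ ((n - m : ℤ) : ℝ) ≤ R2 ∧ R2 ≤ (m : ℝ))) ∧
    (∀ R1 R2 : ℝ, detB n m m n R1 R2 → detC n m m n R1 R2) := by
  have hmn : m ≤ n := by omega
  refine ⟨detB_symm_iff hmn h1, fun R1 R2 hB => ?_⟩
  obtain ⟨hR₁, hR₁', hR₂, hR₂'⟩ := (detB_symm_iff hmn h1 R1 R2).mp hB
  have hmn' : (m : ℝ) ≤ n := by exact_mod_cast hmn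
  have h2' : 3 * (m : ℝ) ≤ 2 * n := by exact_mod_cast h2
  push_cast at hR₁ hR₂
  rw [detC_symm_iff hmn h1]
  refine ⟨?_, ?_, ?_, ?_, ?_, ?_, ?_, ?_⟩ <;> linarith

/-- Symmetric deterministic IC with `n ≤ 2m` and `3m ≤ 2n` (`1/2 ≤ α ≤ 2/3`): the box `B`
is the square `[n−m, m] × [n−m, m]` and `B ⊆ C`, so `C ∩ B = B`. -/
theorem stmt7 (n m : ℤ) (hn : 0 ≤ n) (hm : 0 ≤ m) (h1 : n ≤ 2 * m) (h2 : 3 * m ≤ 2 * n) :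
    (∀ R1 R2 : ℝ, detB n m m n R1 R2 ↔
      (((n - m : ℤ) : ℝ) ≤ R1 ∧ R1 ≤ (m : ℝ) ∧ ((n - m : ℤ) : ℝ) ≤ R2 ∧ R2 ≤ (m : ℝ))) ∧
    (∀ R1 R2 : ℝ, detB n m m n R1 R2 → detC n m m n R1 R2) :=
  stmt7_general n m h1 h2
end

section
/- For every symmetric deterministic interference channel, the symmetric rate point on the sum-capacity boundary is a Nash equilibrium point: there exists a real R ≥ 0 such that (R,R) ∈ C ∩ B and R1'+R2' ≤ 2R for every (R1',R2') ∈ C. -/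
/-!
At symmetric gains the constraints of `C` on `R1 + R2` reduce to three bounds (`2n` from the
single-user ones), and their minimum `s` is the sum capacity. The point `(s/2, s/2)` satisfies
them, and also the weighted bounds `3R ≤ …`, which are combinations of them; a case split on `m ≤ n`
shows that `s/2` lies between `L` and `U`.
-/

def symSumCap (n m : ℤ) : ℤ :=
  min (2 * n) (min (ipos (n - m) + max n m) (2 * max m (ipos (n - m))))

theorem symSumCap_le (n m : ℤ) :
    symSumCap n m ≤ 2 * n ∧ symSumCap n m ≤ ipos (n - m) + max n m ∧
      symSumCap n m ≤ 2 * max m (ipos (n - m)) := by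
  unfold symSumCap; omega

theorem symSumCap_nonneg {n : ℤ} (hn : 0 ≤ n) (m : ℤ) : 0 ≤ symSumCap n m := by
  simp only [symSumCap, ipos]; omega

theorem two_mul_detL_le_symSumCap {n m : ℤ} (hn : 0 ≤ n) (hm : 0 ≤ m) :
    2 * detL n m ≤ symSumCap n m := by
  simp only [symSumCap, detL, ipos]; omega

theorem symSumCap_le_two_mul_detU (n m : ℤ) : symSumCap n m ≤ 2 * detU n m m n := by
  simp only [symSumCap, detU, detL, ipos]
  split <;> omega

theorem add_le_symSumCap_of_detC {n m : ℤ} {R1 R2 : ℝ} (h : detC n m m n R1 R2) :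
    R1 + R2 ≤ symSumCap n m := by
  obtain ⟨-, -, h1, h2, h12, -, hcross, -, -⟩ := h
  simp only [symSumCap, Int.cast_min, Int.cast_mul, Int.cast_ofNat, le_min_iff]
  push_cast at h12 hcross ⊢
  exact ⟨by linarith, h12, by linarith⟩

theorem detC_half_symSumCap {n : ℤ} (hn : 0 ≤ n) (m : ℤ) :
    detC n m m n (symSumCap n m / 2) (symSumCap n m / 2) := by
  have hs := symSumCap_nonneg hn m
  obtain ⟨h1, h12, hcross⟩ := symSumCap_le n m
  rify at hs h1 h12 hcross
  refine ⟨by linarith, by linarith, by linarith, by linarith, ?_, ?_, ?_, ?_, ?_⟩ <;> push_cast <;>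
    linarith

theorem detB_half_symSumCap {n m : ℤ} (hn : 0 ≤ n) (hm : 0 ≤ m) :
    detB n m m n (symSumCap n m / 2) (symSumCap n m / 2) := by
  have hL := two_mul_detL_le_symSumCap hn hm
  have hU := symSumCap_le_two_mul_detU n m
  rify at hL hU
  exact ⟨by linarith, by linarith, by linarith, by linarith⟩

/-- For every symmetric deterministic IC, the symmetric rate point on the sum-capacity
boundary is a Nash equilibrium point: there is `R ≥ 0` with `(R,R) ∈ C ∩ B` and
`R1' + R2' ≤ 2R` for all `(R1',R2') ∈ C`. -/
theorem stmt10 (n m : ℤ) (hn : 0 ≤ n) (hm : 0 ≤ m) :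
    ∃ R : ℝ, 0 ≤ R ∧ detC n m m n R R ∧ detB n m m n R R ∧
      ∀ R1' R2' : ℝ, detC n m m n R1' R2' → R1' + R2' ≤ 2 * R := by
  refine ⟨symSumCap n m / 2, ?_, detC_half_symSumCap hn m, detB_half_symSumCap hn hm,
    fun R1 R2 h => by linarith [add_le_symSumCap_of_detC h]⟩
  have hs := symSumCap_nonneg hn m
  rify at hs
  positivity
end

section
/- (Lemma 7) For any (R1,R2) ∈ C ∩ B, there exists a non-randomized Han-Kobayashi rate split that fully utilizes the interference-free levels at each transmitter: nonnegative reals R1c, R1p, R2c, R2p with Ri = Ric + Rip for i = 1,2, such that the tuple (R1c, 0, R1p, R2c, 0, R2p) lies in R_RHK and Rip ≥ ai, Ric ≥ bi for i = 1,2. -/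
/-- `aᵢ = (nᵢᵢ − nⱼᵢ − nᵢⱼ)⁺`: private interference-free levels of user `i`. -/
def detA (nii nij nji : ℤ) : ℤ := ipos (nii - nji - nij)

/-- `bᵢ = (nᵢᵢ − max(nᵢᵢ − nⱼᵢ, nᵢⱼ))⁺`: common interference-free levels of user `i`. -/
def detBcom (nii nij nji : ℤ) : ℤ := ipos (nii - max (nii - nji) nij)

/-- Modified MAC constraints at receiver `i` (gains `nᵢᵢ, nᵢⱼ, nⱼᵢ`), on the own common
and private rates `Ric, Rip` and the other user's common and common-random rates
`Rjc, Rjr`. -/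
def detMAC (nii nij nji : ℤ) (Ric Rip Rjc Rjr : ℝ) : Prop :=
  Ric + Rip + Rjc + Rjr ≤ ((max nii nij : ℤ) : ℝ) ∧
  Rip + Rjc + Rjr ≤ ((max nij (ipos (nii - nji)) : ℤ) : ℝ) ∧
  Rip ≤ ((ipos (nii - nji) : ℤ) : ℝ) ∧
  Ric + Rip ≤ (nii : ℝ)

/-- The region `R_RHK`: nonnegative rate tuples `(R1c, R1r, R1p, R2c, R2r, R2p)`
satisfying the modified MAC constraints at both receivers. -/
def detRHK (n11 n12 n21 n22 : ℤ) (R1c R1r R1p R2c R2r R2p : ℝ) : Prop :=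
  0 ≤ R1c ∧ 0 ≤ R1r ∧ 0 ≤ R1p ∧ 0 ≤ R2c ∧ 0 ≤ R2r ∧ 0 ≤ R2p ∧
  detMAC n11 n12 n21 R1c R1p R2c R2r ∧
  detMAC n22 n21 n12 R2c R2p R1c R1r

/-! Split each rate with the private part as large as the levels below the cross gain allow,
`Rᵢₚ = min (Rᵢ − bᵢ) (nᵢᵢ − nⱼᵢ)⁺`, and the rest common. Then `Rᵢc ≥ bᵢ` holds by construction,
`Rᵢₚ ≥ aᵢ` because `Lᵢ = aᵢ + bᵢ`, and the private cap is the third MAC constraint. In either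
branch of the other user's minimum, the remaining MAC constraints at receiver `i` reduce to the
box bound `Rᵢ ≤ Uᵢ` or to the sum-rate bound of `C`, plus an inequality among the integer gains. -/

lemma ipos_nonneg (x : ℤ) : 0 ≤ ipos x := le_max_right x 0

section GainInequalities

variable (nii nij nji njj : ℤ)

lemma detA_add_detBcom (hji : 0 ≤ nji) :
    detA nii nij nji + detBcom nii nij nji = detL nii nij := by
  simp only [detA, detBcom, detL, ipos]; omega

lemma detA_le_ipos (hij : 0 ≤ nij) : detA nii nij nji ≤ ipos (nii - nji) := by
  simp only [detA, ipos]; omega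

lemma detU_add_detBcom_le_max (hij : 0 ≤ nij) :
    detU nii nij nji njj + detBcom njj nji nij ≤ max nii nij := by
  simp only [detU, detL, detBcom, ipos]; split_ifs <;> omega

lemma detU_add_detBcom_le_max_ipos_add_detBcom (hij : 0 ≤ nij) :
    detU nii nij nji njj + detBcom njj nji nij
      ≤ max nij (ipos (nii - nji)) + detBcom nii nij nji := by
  simp only [detU, detL, detBcom, ipos]; split_ifs <;> omega

lemma ipos_add_max_le_max_add_ipos :
    ipos (nii - nij) + max njj nij ≤ max nii nij + ipos (njj - nij) := by
  simp only [ipos]; omega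

lemma ipos_add_max_le_max_ipos_add_detBcom_add_ipos :
    ipos (nii - nij) + max njj nij
      ≤ max nij (ipos (nii - nji)) + detBcom nii nij nji + ipos (njj - nij) := by
  simp only [detBcom, ipos]; omega

end GainInequalities

noncomputable def privateRate (nii nij nji : ℤ) (R : ℝ) : ℝ :=
  min (R - detBcom nii nij nji) (ipos (nii - nji))

lemma detBcom_le_sub_privateRate (nii nij nji : ℤ) (R : ℝ) :
    (detBcom nii nij nji : ℝ) ≤ R - privateRate nii nij nji R := by
  have : privateRate nii nij nji R ≤ R - detBcom nii nij nji := min_le_left _ _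
  linarith

lemma sub_privateRate_eq_or_eq (nii nij nji : ℤ) (R : ℝ) :
    R - privateRate nii nij nji R = detBcom nii nij nji ∨
      R - privateRate nii nij nji R = R - ipos (nii - nji) := by
  rcases min_choice (R - detBcom nii nij nji : ℝ) (ipos (nii - nji)) with h | h
  · left; rw [privateRate, h]; ring
  · right; rw [privateRate, h]

section RateSplit

variable {nii nij nji njj : ℤ} {Ri Rj : ℝ}

lemma detA_le_privateRate (hij : 0 ≤ nij) (hji : 0 ≤ nji) (hL : (detL nii nij : ℝ) ≤ Ri) :
    (detA nii nij nji : ℝ) ≤ privateRate nii nij nji Ri := by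
  have hsplit : (detA nii nij nji : ℝ) + detBcom nii nij nji = detL nii nij := by
    exact_mod_cast detA_add_detBcom nii nij nji hji
  have hcap : (detA nii nij nji : ℝ) ≤ ipos (nii - nji) := by
    exact_mod_cast detA_le_ipos nii nij nji hij
  exact le_min (by linarith) hcap

lemma detMAC_privateRate (hij : 0 ≤ nij) (hRi : Ri ≤ nii)
    (hsum : Ri + Rj ≤ ((ipos (nii - nij) + max njj nij : ℤ) : ℝ))
    (hU : Ri ≤ detU nii nij nji njj) :
    detMAC nii nij nji (Ri - privateRate nii nij nji Ri) (privateRate nii nij nji Ri)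
      (Rj - privateRate njj nji nij Rj) 0 := by
  have hpi := detBcom_le_sub_privateRate nii nij nji Ri
  have hcap : privateRate nii nij nji Ri ≤ ipos (nii - nji) := min_le_right _ _
  have hU₁ : (detU nii nij nji njj : ℝ) + detBcom njj nji nij ≤ max (nii : ℝ) nij := by
    exact_mod_cast detU_add_detBcom_le_max nii nij nji njj hij
  have hU₂ : (detU nii nij nji njj : ℝ) + detBcom njj nji nij
      ≤ max (nij : ℝ) (ipos (nii - nji)) + detBcom nii nij nji := by
    exact_mod_cast detU_add_detBcom_le_max_ipos_add_detBcom nii nij nji njj hij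
  have hS₁ : (ipos (nii - nij) : ℝ) + max (njj : ℝ) nij
      ≤ max (nii : ℝ) nij + ipos (njj - nij) := by
    exact_mod_cast ipos_add_max_le_max_add_ipos nii nij njj
  have hS₂ : (ipos (nii - nij) : ℝ) + max (njj : ℝ) nij
      ≤ max (nij : ℝ) (ipos (nii - nji)) + detBcom nii nij nji + ipos (njj - nij) := by
    exact_mod_cast ipos_add_max_le_max_ipos_add_detBcom_add_ipos nii nij nji njj
  simp only [detMAC]
  push_cast at hsum ⊢
  refine ⟨?_, ?_, hcap, by linarith⟩ <;>
    rcases sub_privateRate_eq_or_eq njj nji nij Rj with h | h <;> rw [h] <;> linarith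

end RateSplit

theorem stmt11_general (n11 n12 n21 n22 : ℤ)
    (h12 : 0 ≤ n12) (h21 : 0 ≤ n21)
    (R1 R2 : ℝ) (hC : detC n11 n12 n21 n22 R1 R2) (hB : detB n11 n12 n21 n22 R1 R2) :
    ∃ R1c R1p R2c R2p : ℝ,
      0 ≤ R1c ∧ 0 ≤ R1p ∧ 0 ≤ R2c ∧ 0 ≤ R2p ∧
      R1 = R1c + R1p ∧ R2 = R2c + R2p ∧
      detRHK n11 n12 n21 n22 R1c 0 R1p R2c 0 R2p ∧
      ((detA n11 n12 n21 : ℤ) : ℝ) ≤ R1p ∧ ((detBcom n11 n12 n21 : ℤ) : ℝ) ≤ R1c ∧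
      ((detA n22 n21 n12 : ℤ) : ℝ) ≤ R2p ∧ ((detBcom n22 n21 n12 : ℤ) : ℝ) ≤ R2c := by
  obtain ⟨-, -, hR1, hR2, hS1, hS2, -⟩ := hC
  obtain ⟨hL1, hU1, hL2, hU2⟩ := hB
  have hnonneg (x : ℤ) : (0 : ℝ) ≤ ipos x := by exact_mod_cast ipos_nonneg x
  have ha1 := detA_le_privateRate (nji := n21) h12 h21 hL1
  have ha2 := detA_le_privateRate (nji := n12) h21 h12 hL2
  have hb1 := detBcom_le_sub_privateRate n11 n12 n21 R1
  have hb2 := detBcom_le_sub_privateRate n22 n21 n12 R2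
  have hc1 := (hnonneg _).trans hb1
  have hp1 := (hnonneg _).trans ha1
  have hc2 := (hnonneg _).trans hb2
  have hp2 := (hnonneg _).trans ha2
  refine ⟨_, _, _, _, hc1, hp1, hc2, hp2, by ring, by ring,
    ⟨hc1, le_rfl, hp1, hc2, le_rfl, hp2,
      detMAC_privateRate h12 hR1 hS1 hU1,
      detMAC_privateRate h21 hR2 (by linarith) hU2⟩, ha1, hb1, ha2, hb2⟩

/-- (Lemma 7) For any `(R1,R2) ∈ C ∩ B` there is a non-randomized Han-Kobayashi rate
split that fully utilizes the interference-free levels at each transmitter. -/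
theorem stmt11 (n11 n12 n21 n22 : ℤ)
    (h11 : 0 ≤ n11) (h12 : 0 ≤ n12) (h21 : 0 ≤ n21) (h22 : 0 ≤ n22)
    (R1 R2 : ℝ) (hC : detC n11 n12 n21 n22 R1 R2) (hB : detB n11 n12 n21 n22 R1 R2) :
    ∃ R1c R1p R2c R2p : ℝ,
      0 ≤ R1c ∧ 0 ≤ R1p ∧ 0 ≤ R2c ∧ 0 ≤ R2p ∧
      R1 = R1c + R1p ∧ R2 = R2c + R2p ∧
      detRHK n11 n12 n21 n22 R1c 0 R1p R2c 0 R2p ∧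
      ((detA n11 n12 n21 : ℤ) : ℝ) ≤ R1p ∧ ((detBcom n11 n12 n21 : ℤ) : ℝ) ≤ R1c ∧
      ((detA n22 n21 n12 : ℤ) : ℝ) ≤ R2p ∧ ((detBcom n22 n21 n12 : ℤ) : ℝ) ≤ R2c :=
  stmt11_general n11 n12 n21 n22 h12 h21 R1 R2 hC hB
end

section
/- (Lemma 6) Suppose the nonnegative reals R1c, R1p, R2c, R2p are such that (R1c, 0, R1p, R2c, 0, R2p) ∈ R_RHK and the split fully utilizes the interference-free levels, i.e., Rip ≥ ai and Ric ≥ bi for i = 1,2. Then there exist random common rates R1r, R2r ≥ 0 such that (R1c, R1r, R1p, R2c, R2r, R2p) ∈ R_RHK and is self-saturated at both receivers. -/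
/-- A tuple in `R_RHK` is self-saturated at receiver 1 if any increase of
`R1c + R1p` (keeping all other rates fixed) violates a modified MAC constraint
at receiver 1. -/
def detSelfSat1 (n11 n12 n21 : ℤ) (R1c R1p R2c R2r : ℝ) : Prop :=
  ∀ R1c' R1p' : ℝ, 0 ≤ R1c' → 0 ≤ R1p' → R1c + R1p < R1c' + R1p' →
    ¬ detMAC n11 n12 n21 R1c' R1p' R2c R2r

/-- Self-saturation at receiver 2. -/
def detSelfSat2 (n22 n21 n12 : ℤ) (R2c R2p R1c R1r : ℝ) : Prop :=
  ∀ R2c' R2p' : ℝ, 0 ≤ R2c' → 0 ≤ R2p' → R2c + R2p < R2c' + R2p' →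
    ¬ detMAC n22 n21 n12 R2c' R2p' R1c R1r

/-!
Choose the random common rate of user `j` so that the total-rate constraint at receiver `i`
becomes tight: `Rjr = max(nii, nij) − Ric − Rip − Rjc`, which is nonnegative because the
split with no random rates lies in `R_RHK`. A tight total-rate constraint leaves no room to
raise `Ric + Rip`, which is self-saturation. Of the other constraints only
`Rip + Rjc + Rjr ≤ max(nij, (nii − nji)⁺)` involves `Rjr`; after the substitution it reads
`max(nii, nij) − max(nij, (nii − nji)⁺) ≤ Ric`, and the left side is at most `bi`.
-/

lemma max_sub_max_le_detBcom (nii nij nji : ℤ) :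
    max nii nij - max nij (ipos (nii - nji)) ≤ detBcom nii nij nji := by
  simp only [detBcom, ipos]
  omega

lemma detMAC_fill_sum {nii nij nji : ℤ} {Ric Rip Rjc : ℝ}
    (hMAC : detMAC nii nij nji Ric Rip Rjc 0)
    (hb : ((detBcom nii nij nji : ℤ) : ℝ) ≤ Ric) :
    detMAC nii nij nji Ric Rip Rjc (((max nii nij : ℤ) : ℝ) - Ric - Rip - Rjc) := by
  obtain ⟨-, -, hRip, hOwn⟩ := hMAC
  have hbound : ((max nii nij : ℤ) : ℝ) - ((max nij (ipos (nii - nji)) : ℤ) : ℝ)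
      ≤ ((detBcom nii nij nji : ℤ) : ℝ) := by
    exact_mod_cast max_sub_max_le_detBcom nii nij nji
  exact ⟨by linarith, by linarith, hRip, hOwn⟩

lemma detSelfSat1_of_sum_eq {nii nij nji : ℤ} {Ric Rip Rjc Rjr : ℝ}
    (hsum : Ric + Rip + Rjc + Rjr = ((max nii nij : ℤ) : ℝ)) :
    detSelfSat1 nii nij nji Ric Rip Rjc Rjr := by
  rintro Ric' Rip' - - hlt ⟨hTotal, -⟩
  linarith

theorem stmt12_general (n11 n12 n21 n22 : ℤ)
    (R1c R1p R2c R2p : ℝ)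
    (hRHK : detRHK n11 n12 n21 n22 R1c 0 R1p R2c 0 R2p)
    (hb1 : ((detBcom n11 n12 n21 : ℤ) : ℝ) ≤ R1c)
    (hb2 : ((detBcom n22 n21 n12 : ℤ) : ℝ) ≤ R2c) :
    ∃ R1r R2r : ℝ, 0 ≤ R1r ∧ 0 ≤ R2r ∧
      detRHK n11 n12 n21 n22 R1c R1r R1p R2c R2r R2p ∧
      detSelfSat1 n11 n12 n21 R1c R1p R2c R2r ∧
      detSelfSat2 n22 n21 n12 R2c R2p R1c R1r := by
  obtain ⟨h1c, -, h1p, h2c, -, h2p, hMAC1, hMAC2⟩ := hRHK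
  have hTotal1 := hMAC1.1
  have hTotal2 := hMAC2.1
  refine ⟨((max n22 n21 : ℤ) : ℝ) - R2c - R2p - R1c,
    ((max n11 n12 : ℤ) : ℝ) - R1c - R1p - R2c, by linarith, by linarith,
    ⟨h1c, by linarith, h1p, h2c, by linarith, h2p,
      detMAC_fill_sum hMAC1 hb1, detMAC_fill_sum hMAC2 hb2⟩,
    detSelfSat1_of_sum_eq (by ring),
    -- `detSelfSat2` is `detSelfSat1` with the users' roles swapped, definitionally.
    detSelfSat1_of_sum_eq (by ring)⟩

/-- (Lemma 6) If a non-randomized Han-Kobayashi split `(R1c, 0, R1p, R2c, 0, R2p) ∈ R_RHK`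
fully utilizes the interference-free levels (`Rip ≥ aᵢ`, `Ric ≥ bᵢ`), then there are
random common rates `R1r, R2r ≥ 0` such that `(R1c, R1r, R1p, R2c, R2r, R2p) ∈ R_RHK`
and is self-saturated at both receivers. -/
theorem stmt12 (n11 n12 n21 n22 : ℤ)
    (h11 : 0 ≤ n11) (h12 : 0 ≤ n12) (h21 : 0 ≤ n21) (h22 : 0 ≤ n22)
    (R1c R1p R2c R2p : ℝ)
    (hRHK : detRHK n11 n12 n21 n22 R1c 0 R1p R2c 0 R2p)
    (ha1 : ((detA n11 n12 n21 : ℤ) : ℝ) ≤ R1p)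
    (hb1 : ((detBcom n11 n12 n21 : ℤ) : ℝ) ≤ R1c)
    (ha2 : ((detA n22 n21 n12 : ℤ) : ℝ) ≤ R2p)
    (hb2 : ((detBcom n22 n21 n12 : ℤ) : ℝ) ≤ R2c) :
    ∃ R1r R2r : ℝ, 0 ≤ R1r ∧ 0 ≤ R2r ∧
      detRHK n11 n12 n21 n22 R1c R1r R1p R2c R2r R2p ∧
      detSelfSat1 n11 n12 n21 R1c R1p R2c R2r ∧
      detSelfSat2 n22 n21 n12 R2c R2p R1c R1r :=
  stmt12_general n11 n12 n21 n22 R1c R1p R2c R2p hRHK hb1 hb2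
end
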